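/- arXiv:1501.01708 — 2 statements merged into one kernel-verified Lean document; each statement's English description precedes it below -/
import Mathlib

section
/- Let s be a positive integer and suppose A ∈ ℝ^{m×N} satisfies the restricted isometry property of order s+1 with some constant δ < 1/√(s+1). Let x ∈ ℝ^N have support of cardinality exactly s, and set b = Ax. Suppose (Ω_k)_{k=0}^{s} is any sequence of index sets with Ω_0 = ∅ and, for each k ∈ {1,…,s}, Ω_k = Ω_{k−1} ∪ {i_k} where i_k is any index maximizing |⟨r_{k−1}, A e_i⟩| over i ∈ {1,…,N}, and r_{k−1} = b − P_{k−1}(b) with P_{k−1} the orthogonal projection of ℝ^m onto the span of {A e_i : i ∈ Ω_{k−1}}. Then Ω_s = supp(x), and x is the unique vector supported in Ω_s with A x = b. (That is, Orthogonal Matching Pursuit recovers every s-sparse signal x from b = Ax in s iterations.) -/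
/-!
OMP never selects an index outside the support. If the residual is `A u` with `u ≠ 0` supported
in `supp x` and `j ∉ supp u`, then RIP applied to `u + t e_j` for every `t` bounds the Gram entries:
`(‖Au‖² - ‖u‖²)² + ‖u‖² ⟨Au, Ae_j⟩² ≤ δ² ‖u‖⁴`. On the other hand
`‖Au‖² = Σᵢ uᵢ ⟨Au, Aeᵢ⟩ ≤ √s ‖u‖ maxᵢ |⟨Au, Aeᵢ⟩|`, so if `j` attained the maximum the two bounds
together would force `δ² (s + 1) ≥ 1`. Nor does OMP select an index twice: the residual is
orthogonal to the columns already chosen, and it is nonzero by RIP. Hence after `s` steps the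
selected set is `supp x`, and RIP makes `A` injective on vectors supported there.
-/

open Matrix

/-- The symmetric form `[[p, c], [c, q]]` is bounded by `δ` times `diag(U, 1)`, so its first
column has length at most `δ` in the corresponding norm; the proof reads this off the
discriminants of the two quadratics `δ (U + t²) ∓ (p + 2ct + qt²) ≥ 0`. -/
theorem sq_add_mul_sq_le_of_abs_quadratic_le {U p c q δ : ℝ} (hU : 0 ≤ U)
    (h : ∀ t : ℝ, |p + 2 * c * t + q * t ^ 2| ≤ δ * (U + t ^ 2)) :
    p ^ 2 + U * c ^ 2 ≤ δ ^ 2 * U ^ 2 := by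
  have hδ : 0 ≤ δ := by nlinarith [abs_nonneg (p + 2 * c * 1 + q * 1 ^ 2), h 1]
  obtain ⟨hp₁, hp₂⟩ := abs_le.mp (by simpa using h 0)
  have hupper : ∀ t, 0 ≤ (δ - q) * (t * t) + (-2 * c) * t + (δ * U - p) := fun t => by
    nlinarith [(abs_le.mp (h t)).2]
  have hlower : ∀ t, 0 ≤ (δ + q) * (t * t) + (2 * c) * t + (δ * U + p) := fun t => by
    nlinarith [(abs_le.mp (h t)).1]
  have h₁ := discrim_le_zero hupper
  have h₂ := discrim_le_zero hlower
  rw [discrim] at h₁ h₂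
  rcases hδ.eq_or_lt with rfl | hδ
  · obtain rfl : p = 0 := by linarith
    nlinarith
  · nlinarith [mul_le_mul_of_nonneg_left h₁ (by linarith : 0 ≤ δ * U + p),
      mul_le_mul_of_nonneg_left h₂ (by linarith : 0 ≤ δ * U - p)]

theorem sq_mul_lt_one_of_lt_one_div_sqrt {δ a : ℝ} (hδ : 0 ≤ δ) (h : δ < 1 / √a) :
    δ ^ 2 * a < 1 := by
  rcases le_or_gt a 0 with ha | ha
  · nlinarith [sq_nonneg δ]
  · have hδa : δ * √a < 1 := (lt_div_iff₀ (Real.sqrt_pos.mpr ha)).mp h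
    calc δ ^ 2 * a = (δ * √a) ^ 2 := by rw [mul_pow, Real.sq_sqrt ha.le]
      _ < 1 := pow_lt_one₀ (by positivity) hδa two_ne_zero

theorem lt_one_of_lt_one_div_sqrt_succ {δ : ℝ} {k : ℕ} (h : δ < 1 / √((k : ℝ) + 1)) : δ < 1 :=
  h.trans_le <| (div_le_one (by positivity)).mpr (Real.one_le_sqrt.mpr (by simp))

variable {m n : Type*} [Fintype n]

theorem dotProduct_self_nonneg (v : n → ℝ) : 0 ≤ v ⬝ᵥ v :=
  Finset.sum_nonneg fun i _ => mul_self_nonneg (v i)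

theorem dotProduct_self_pos {v : n → ℝ} (hv : v ≠ 0) : 0 < v ⬝ᵥ v :=
  (dotProduct_self_nonneg v).lt_of_ne' (dotProduct_self_eq_zero.not.mpr hv)

theorem sq_dotProduct_le_ncard_support_mul {g u : n → ℝ} {j : n} (hj : ∀ i, |g i| ≤ |g j|) :
    (g ⬝ᵥ u) ^ 2 ≤ (Function.support u).ncard * (u ⬝ᵥ u) * g j ^ 2 := by
  classical
  set S := (Function.support u).toFinset
  have hsum : ∀ f : n → ℝ, (∀ i, u i = 0 → f i = 0) → ∑ i ∈ S, f i = ∑ i, f i := fun f hf =>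
    Finset.sum_subset (Finset.subset_univ S) fun i _ hi => hf i (by simpa [S] using hi)
  have hl1 : |g ⬝ᵥ u| ≤ |g j| * ∑ i ∈ S, |u i| := by
    rw [dotProduct, ← hsum _ fun i hi => by simp [hi], Finset.mul_sum]
    refine (Finset.abs_sum_le_sum_abs _ _).trans (Finset.sum_le_sum fun i _ => ?_)
    rw [abs_mul]
    exact mul_le_mul_of_nonneg_right (hj i) (abs_nonneg _)
  have hl2 : (∑ i ∈ S, |u i|) ^ 2 ≤ S.card * (u ⬝ᵥ u) := by
    refine sq_sum_le_card_mul_sum_sq.trans_eq ?_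
    rw [dotProduct, ← hsum _ fun i hi => by simp [hi]]
    simp only [← sq, sq_abs]
  rw [Set.ncard_eq_toFinset_card', ← sq_abs, ← sq_abs (g j)]
  calc |g ⬝ᵥ u| ^ 2 ≤ (|g j| * ∑ i ∈ S, |u i|) ^ 2 := pow_le_pow_left₀ (abs_nonneg _) hl1 2
    _ ≤ S.card * (u ⬝ᵥ u) * |g j| ^ 2 := by rw [mul_pow, mul_comm]; gcongr

theorem exists_support_subset_of_mem_span_cols [DecidableEq n] (A : Matrix m n ℝ) {S : Set n}
    {v : m → ℝ} (hv : v ∈ Submodule.span ℝ ((fun i => A *ᵥ Pi.single i 1) '' S)) :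
    ∃ w : n → ℝ, Function.support w ⊆ S ∧ A *ᵥ w = v := by
  have himage : (fun i => A *ᵥ Pi.single i 1) '' S = A.mulVecLin '' (Pi.basisFun ℝ n '' S) := by
    rw [Set.image_image]; simp
  rw [himage, Submodule.span_image] at hv
  obtain ⟨w, hw, rfl⟩ := hv
  refine ⟨w, fun i hi => (Module.Basis.mem_span_image _).mp hw ?_, rfl⟩
  simpa using hi

variable [Fintype m]

theorem dotProduct_mulVec_single_one [DecidableEq n] (r : m → ℝ) (A : Matrix m n ℝ) (i : n) :
    r ⬝ᵥ (A *ᵥ Pi.single i 1) = (r ᵥ* A) i := by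
  rw [dotProduct_mulVec, dotProduct_single, mul_one]

def IsRIP (A : Matrix m n ℝ) (s : ℕ) (δ : ℝ) : Prop :=
  ∀ y : n → ℝ, (Function.support y).ncard ≤ s →
    (1 - δ) * (y ⬝ᵥ y) ≤ (A *ᵥ y) ⬝ᵥ (A *ᵥ y) ∧ (A *ᵥ y) ⬝ᵥ (A *ᵥ y) ≤ (1 + δ) * (y ⬝ᵥ y)

namespace IsRIP

variable {A : Matrix m n ℝ} {s : ℕ} {δ : ℝ}

theorem abs_sub_le (hA : IsRIP A s δ) {y : n → ℝ} (hy : (Function.support y).ncard ≤ s) :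
    |(A *ᵥ y) ⬝ᵥ (A *ᵥ y) - y ⬝ᵥ y| ≤ δ * (y ⬝ᵥ y) :=
  abs_sub_le_iff.mpr ⟨by linarith [(hA y hy).2], by linarith [(hA y hy).1]⟩

theorem nonneg (hA : IsRIP A s δ) {y : n → ℝ} (hy₀ : y ≠ 0)
    (hy : (Function.support y).ncard ≤ s) : 0 ≤ δ :=
  nonneg_of_mul_nonneg_left ((abs_nonneg _).trans (hA.abs_sub_le hy)) (dotProduct_self_pos hy₀)

theorem eq_zero_of_mulVec_eq_zero (hA : IsRIP A s δ) (hδ : δ < 1) {y : n → ℝ}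
    (hy : (Function.support y).ncard ≤ s) (hAy : A *ᵥ y = 0) : y = 0 := by
  have := (hA y hy).1
  rw [hAy, dotProduct_zero] at this
  exact dotProduct_self_eq_zero.mp <|
    le_antisymm (nonpos_of_mul_nonpos_right this (by linarith)) (dotProduct_self_nonneg y)

theorem sq_sub_add_mul_sq_le [DecidableEq n] (hA : IsRIP A (s + 1) δ) {u : n → ℝ}
    (hu : (Function.support u).ncard ≤ s) {j : n} (hj : u j = 0) :
    ((A *ᵥ u) ⬝ᵥ (A *ᵥ u) - u ⬝ᵥ u) ^ 2 + (u ⬝ᵥ u) * ((A *ᵥ u) ⬝ᵥ (A *ᵥ Pi.single j 1)) ^ 2 ≤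
      δ ^ 2 * (u ⬝ᵥ u) ^ 2 := by
  refine sq_add_mul_sq_le_of_abs_quadratic_le
    (q := (A *ᵥ Pi.single j 1) ⬝ᵥ (A *ᵥ Pi.single j 1) - 1) (dotProduct_self_nonneg u) fun t => ?_
  have hsupp : Function.support (u + t • Pi.single j 1) ⊆ insert j (Function.support u) := by
    intro i hi
    by_cases hij : i = j
    · exact .inl hij
    · exact .inr (by simpa [hij] using hi)
  have := hA.abs_sub_le <| (Set.ncard_le_ncard hsupp).trans <|
    (Set.ncard_insert_le _ _).trans (Nat.succ_le_succ hu)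
  convert this using 2 <;>
  · simp only [mulVec_add, mulVec_smul, add_dotProduct, dotProduct_add, smul_dotProduct,
      dotProduct_smul, smul_eq_mul, dotProduct_single, single_dotProduct, hj,
      dotProduct_comm (A *ᵥ Pi.single j 1) (A *ᵥ u), Pi.add_apply, Pi.smul_apply,
      Pi.single_eq_same]
    ring

theorem mem_support_of_forall_abs_dotProduct_le [DecidableEq n] (hA : IsRIP A (s + 1) δ)
    (hδ : δ < 1 / √((s : ℝ) + 1)) {u : n → ℝ} (hu₀ : u ≠ 0) (hu : (Function.support u).ncard ≤ s)
    {j : n} (hj : ∀ i, |(A *ᵥ u) ⬝ᵥ (A *ᵥ Pi.single i 1)| ≤ |(A *ᵥ u) ⬝ᵥ (A *ᵥ Pi.single j 1)|) :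
    j ∈ Function.support u := by
  by_contra hju
  have hs : (0 : ℝ) < s := by
    have := (Set.ncard_pos (Set.toFinite _)).mpr (Function.support_nonempty_iff.mpr hu₀)
    exact_mod_cast this.trans_le hu
  have hU := dotProduct_self_pos hu₀
  have hδ₂ := sq_mul_lt_one_of_lt_one_div_sqrt (hA.nonneg hu₀ (hu.trans s.le_succ)) hδ
  have hgram := hA.sq_sub_add_mul_sq_le hu (Function.notMem_support.mp hju)
  have hcorr : ((A *ᵥ u) ⬝ᵥ (A *ᵥ u)) ^ 2 ≤
      s * (u ⬝ᵥ u) * ((A *ᵥ u) ⬝ᵥ (A *ᵥ Pi.single j 1)) ^ 2 := by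
    simp only [dotProduct_mulVec_single_one] at hj ⊢
    rw [dotProduct_mulVec]
    refine (sq_dotProduct_le_ncard_support_mul hj).trans ?_
    gcongr
  -- `(s + 1) (s (R - U)² + R²) = ((s + 1) R - s U)² + s U²` with `R = ‖Au‖²`, `U = ‖u‖²`
  have : s * (u ⬝ᵥ u) ^ 2 ≤ s * ((s + 1) * δ ^ 2 * (u ⬝ᵥ u) ^ 2) := by
    nlinarith [mul_le_mul_of_nonneg_left hgram hs.le,
      sq_nonneg ((s + 1) * ((A *ᵥ u) ⬝ᵥ (A *ᵥ u)) - s * (u ⬝ᵥ u))]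
  nlinarith [mul_pos hs (mul_pos hU hU)]

theorem omp_selection_mem_support_diff [DecidableEq n] (hA : IsRIP A (s + 1) δ)
    (hδ : δ < 1 / √((s : ℝ) + 1))
    {x : n → ℝ} (hx : (Function.support x).ncard = s) {S : Set n}
    (hS : S ⊆ Function.support x) (hSs : S.ncard < s) {p : m → ℝ}
    (hp : p ∈ Submodule.span ℝ ((fun i => A *ᵥ Pi.single i 1) '' S))
    (horth : ∀ v ∈ Submodule.span ℝ ((fun i => A *ᵥ Pi.single i 1) '' S), (A *ᵥ x - p) ⬝ᵥ v = 0)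
    {j : n} (hj : ∀ i, |(A *ᵥ x - p) ⬝ᵥ (A *ᵥ Pi.single i 1)| ≤
      |(A *ᵥ x - p) ⬝ᵥ (A *ᵥ Pi.single j 1)|) :
    j ∈ Function.support x \ S := by
  obtain ⟨w, hwS, rfl⟩ := exists_support_subset_of_mem_span_cols A hp
  rw [← mulVec_sub] at horth hj
  have hu : Function.support (x - w) ⊆ Function.support x :=
    (Function.support_sub _ _).trans (Set.union_subset subset_rfl (hwS.trans hS))
  have hus : (Function.support (x - w)).ncard ≤ s := hx ▸ Set.ncard_le_ncard hu
  have hu₀ : x - w ≠ 0 := by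
    intro h
    rw [sub_eq_zero] at h
    subst h
    have := Set.ncard_le_ncard hwS
    omega
  refine ⟨hu (hA.mem_support_of_forall_abs_dotProduct_le hδ hu₀ hus hj), fun hjS => hu₀ ?_⟩
  have hcorr : (A *ᵥ (x - w)) ᵥ* A = 0 := by
    have hzero := horth _ (Submodule.subset_span ⟨j, hjS, rfl⟩)
    ext i
    have := hj i
    rwa [hzero, abs_zero, abs_nonpos_iff, dotProduct_mulVec_single_one] at this
  refine hA.eq_zero_of_mulVec_eq_zero (lt_one_of_lt_one_div_sqrt_succ hδ) (hus.trans s.le_succ) ?_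
  rw [← dotProduct_self_eq_zero, dotProduct_mulVec, hcorr, zero_dotProduct]

end IsRIP

theorem omp_exact_recovery_general (s m N : ℕ)
    (A : Matrix (Fin m) (Fin N) ℝ) (δ : ℝ) (hδ : δ < 1 / Real.sqrt ((s : ℝ) + 1))
    (hRIP : ∀ y : Fin N → ℝ, (Function.support y).ncard ≤ s + 1 →
      (1 - δ) * (y ⬝ᵥ y) ≤ (A *ᵥ y) ⬝ᵥ (A *ᵥ y) ∧
        (A *ᵥ y) ⬝ᵥ (A *ᵥ y) ≤ (1 + δ) * (y ⬝ᵥ y))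
    (x : Fin N → ℝ) (hx : (Function.support x).ncard = s)
    (b : Fin m → ℝ) (hb : b = A *ᵥ x)
    (Ω : ℕ → Set (Fin N)) (hΩ0 : Ω 0 = ∅)
    (p : ℕ → Fin m → ℝ)
    (hpmem : ∀ k < s,
      p k ∈ Submodule.span ℝ ((fun i => A *ᵥ (Pi.single i 1 : Fin N → ℝ)) '' Ω k))
    (hporth : ∀ k < s,
      ∀ v ∈ Submodule.span ℝ ((fun i => A *ᵥ (Pi.single i 1 : Fin N → ℝ)) '' Ω k),
        (b - p k) ⬝ᵥ v = 0)
    (idx : ℕ → Fin N)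
    (hΩsucc : ∀ k < s, Ω (k + 1) = Ω k ∪ {idx k})
    (hmax : ∀ k < s, ∀ i : Fin N,
      |(b - p k) ⬝ᵥ (A *ᵥ (Pi.single i 1 : Fin N → ℝ))| ≤
        |(b - p k) ⬝ᵥ (A *ᵥ (Pi.single (idx k) 1 : Fin N → ℝ))|) :
    Ω s = Function.support x ∧
    ∀ y : Fin N → ℝ, Function.support y ⊆ Ω s → A *ᵥ y = b → y = x := by
  subst hb
  have hA : IsRIP A (s + 1) δ := hRIP
  have hΩ : ∀ k ≤ s, Ω k ⊆ Function.support x ∧ (Ω k).ncard = k := by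
    intro k hk
    induction k with
    | zero => simp [hΩ0]
    | succ k ih =>
      obtain ⟨hsub, hcard⟩ := ih (by omega)
      obtain ⟨hjx, hjΩ⟩ :=
        hA.omp_selection_mem_support_diff hδ hx hsub (by omega) (hpmem k hk) (hporth k hk)
          (hmax k hk)
      rw [hΩsucc k hk, Set.union_singleton]
      exact ⟨Set.insert_subset hjx hsub, by rw [Set.ncard_insert_of_notMem hjΩ, hcard]⟩
  obtain ⟨hsub, hcard⟩ := hΩ s le_rfl
  have hΩs : Ω s = Function.support x := Set.eq_of_subset_of_ncard_le hsub (by rw [hcard, hx])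
  refine ⟨hΩs, fun y hy hAy => sub_eq_zero.mp ?_⟩
  refine hA.eq_zero_of_mulVec_eq_zero (lt_one_of_lt_one_div_sqrt_succ hδ) ?_
    (by rw [mulVec_sub, hAy, sub_self])
  have hyx : Function.support (y - x) ⊆ Function.support x :=
    (Function.support_sub _ _).trans (Set.union_subset (hΩs ▸ hy) subset_rfl)
  exact (Set.ncard_le_ncard hyx).trans (hx.trans_le s.le_succ)

/-- Theorem 1: If `A` satisfies the RIP of order `s+1` with `δ < 1/√(s+1)`,
then OMP recovers every `s`-sparse signal `x` from `b = Ax` in `s` iterations: for any run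
of OMP (with sets `Ω_0 = ∅`, `Ω_{k+1} = Ω_k ∪ {idx k}` where `idx k` maximizes
`|⟨r_k, A e_i⟩|`, `r_k = b − p_k`, and `p_k` the orthogonal projection of `b` onto the span
of the columns indexed by `Ω_k`, characterized by membership and orthogonality of the
residual), one has `Ω_s = supp(x)` and `x` is the unique vector supported in `Ω_s`
with `Ax = b`. -/
theorem omp_exact_recovery (s m N : ℕ) (hs : 0 < s)
    (A : Matrix (Fin m) (Fin N) ℝ) (δ : ℝ) (hδ : δ < 1 / Real.sqrt ((s : ℝ) + 1))
    (hRIP : ∀ y : Fin N → ℝ, (Function.support y).ncard ≤ s + 1 →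
      (1 - δ) * (y ⬝ᵥ y) ≤ (A *ᵥ y) ⬝ᵥ (A *ᵥ y) ∧
        (A *ᵥ y) ⬝ᵥ (A *ᵥ y) ≤ (1 + δ) * (y ⬝ᵥ y))
    (x : Fin N → ℝ) (hx : (Function.support x).ncard = s)
    (b : Fin m → ℝ) (hb : b = A *ᵥ x)
    (Ω : ℕ → Set (Fin N)) (hΩ0 : Ω 0 = ∅)
    (p : ℕ → Fin m → ℝ)
    (hpmem : ∀ k < s,
      p k ∈ Submodule.span ℝ ((fun i => A *ᵥ (Pi.single i 1 : Fin N → ℝ)) '' Ω k))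
    (hporth : ∀ k < s,
      ∀ v ∈ Submodule.span ℝ ((fun i => A *ᵥ (Pi.single i 1 : Fin N → ℝ)) '' Ω k),
        (b - p k) ⬝ᵥ v = 0)
    (idx : ℕ → Fin N)
    (hΩsucc : ∀ k < s, Ω (k + 1) = Ω k ∪ {idx k})
    (hmax : ∀ k < s, ∀ i : Fin N,
      |(b - p k) ⬝ᵥ (A *ᵥ (Pi.single i 1 : Fin N → ℝ))| ≤
        |(b - p k) ⬝ᵥ (A *ᵥ (Pi.single (idx k) 1 : Fin N → ℝ))|) :
    Ω s = Function.support x ∧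
    ∀ y : Fin N → ℝ, Function.support y ⊆ Ω s → A *ᵥ y = b → y = x :=
  omp_exact_recovery_general s m N A δ hδ hRIP x hx b hb Ω hΩ0 p hpmem hporth idx hΩsucc hmax
end

section
/- Let s be a positive integer and let A be the (s+1)×(s+1) real matrix whose upper-left s×s block is √(s/(s+1))·I_s, whose entries in the last column are A_{k,s+1} = 1/√(s(s+1)) for k = 1,…,s and A_{s+1,s+1} = 1, and whose remaining entries (the first s entries of the last row) are 0. Let x = (1, 1, …, 1, 0)ᵀ ∈ ℝ^{s+1}. Then ⟨A e_k, A x⟩ = s/(s+1) for every k ∈ {1, …, s+1}; in particular, the index s+1, which lies outside supp(x), attains the maximum of |⟨Ax, A e_k⟩| over all k. -/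
/-! With `a = √(s/(s+1))` we have `A x = a • x`, so `⟨A e_k, A x⟩` is `a` times the sum of the
first `s` entries of column `k`: this is `a * a` for `k ≤ s` and `a * (s / √(s(s+1)))` for
`k = s+1`, and both equal `s/(s+1)`. -/

open Matrix

def ompExampleMatrix (s : ℕ) (a b : ℝ) : Matrix (Fin (s + 1)) (Fin (s + 1)) ℝ :=
  fun i j => if (j : ℕ) < s then (if i = j then a else 0) else (if (i : ℕ) < s then b else 1)

def headIndicator (s : ℕ) : Fin (s + 1) → ℝ := fun k => if (k : ℕ) < s then 1 else 0

theorem headIndicator_last (s : ℕ) : headIndicator s (Fin.last s) = 0 := by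
  simp [headIndicator]

theorem dotProduct_headIndicator (s : ℕ) (v : Fin (s + 1) → ℝ) :
    v ⬝ᵥ headIndicator s = ∑ i : Fin s, v i.castSucc := by
  simp [dotProduct, headIndicator, Fin.sum_univ_castSucc]

theorem ompExampleMatrix_mulVec_headIndicator (s : ℕ) (a b : ℝ) :
    ompExampleMatrix s a b *ᵥ headIndicator s = a • headIndicator s := by
  ext i
  rw [mulVec, dotProduct_headIndicator]
  induction i using Fin.lastCases with
  | last => simp [ompExampleMatrix, headIndicator, (Fin.castSucc_ne_last _).symm]
  | cast i => simp [ompExampleMatrix, headIndicator, Fin.castSucc_inj]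

theorem col_ompExampleMatrix_dotProduct_headIndicator (s : ℕ) (a b : ℝ) (k : Fin (s + 1)) :
    (ompExampleMatrix s a b).col k ⬝ᵥ headIndicator s = if (k : ℕ) < s then a else s * b := by
  rw [dotProduct_headIndicator]
  induction k using Fin.lastCases with
  | last => simp [ompExampleMatrix]
  | cast k => simp [ompExampleMatrix, Fin.castSucc_inj]

theorem Real.sqrt_div_mul_div_sqrt_mul (t u : ℝ) (ht : 0 ≤ t) (hu : 0 ≤ u) :
    √(t / u) * (t * (1 / √(t * u))) = t / u := by
  rcases ht.eq_or_lt with rfl | ht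
  · simp
  rw [Real.sqrt_div ht.le, Real.sqrt_mul ht.le]
  have : √t ≠ 0 := by positivity
  field_simp
  rw [Real.sq_sqrt hu]

theorem omp_example_failure_first_step_general (s : ℕ)
    (A : Matrix (Fin (s + 1)) (Fin (s + 1)) ℝ)
    (hA : ∀ i j : Fin (s + 1), A i j =
      if (j : ℕ) < s then (if i = j then Real.sqrt ((s : ℝ) / ((s : ℝ) + 1)) else 0)
      else (if (i : ℕ) < s then 1 / Real.sqrt ((s : ℝ) * ((s : ℝ) + 1)) else 1))
    (x : Fin (s + 1) → ℝ)
    (hx : x = fun k : Fin (s + 1) => if (k : ℕ) < s then 1 else 0) :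
    (∀ k : Fin (s + 1),
      (A *ᵥ (Pi.single k 1 : Fin (s + 1) → ℝ)) ⬝ᵥ (A *ᵥ x) = (s : ℝ) / ((s : ℝ) + 1)) ∧
    Fin.last s ∉ Function.support x ∧
    ∀ k : Fin (s + 1),
      |(A *ᵥ x) ⬝ᵥ (A *ᵥ (Pi.single k 1 : Fin (s + 1) → ℝ))| ≤
        |(A *ᵥ x) ⬝ᵥ (A *ᵥ (Pi.single (Fin.last s) 1 : Fin (s + 1) → ℝ))| := by
  set a := √((s : ℝ) / ((s : ℝ) + 1))
  set b := 1 / √((s : ℝ) * ((s : ℝ) + 1))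
  obtain rfl : A = ompExampleMatrix s a b := funext₂ hA
  obtain rfl : x = headIndicator s := hx
  have inner_col_eq : ∀ k : Fin (s + 1),
      (ompExampleMatrix s a b *ᵥ Pi.single k 1) ⬝ᵥ (ompExampleMatrix s a b *ᵥ headIndicator s)
        = (s : ℝ) / ((s : ℝ) + 1) := by
    intro k
    rw [mulVec_single_one, ompExampleMatrix_mulVec_headIndicator, dotProduct_smul,
      col_ompExampleMatrix_dotProduct_headIndicator, smul_eq_mul]
    split_ifs
    · exact Real.mul_self_sqrt (by positivity)
    · exact Real.sqrt_div_mul_div_sqrt_mul _ _ (by positivity) (by positivity)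
  refine ⟨inner_col_eq, by simp [headIndicator_last], fun k => ?_⟩
  rw [dotProduct_comm, inner_col_eq, dotProduct_comm, inner_col_eq]

/-- For the `(s+1)×(s+1)` matrix `A` with upper-left block `√(s/(s+1))·I_s`,
last column `(1/√(s(s+1)), …, 1/√(s(s+1)), 1)ᵀ` and zeros in the first `s` entries of the
last row, and `x = (1, …, 1, 0)ᵀ`, one has `⟨A e_k, A x⟩ = s/(s+1)` for every `k`;
in particular the index `s+1`, which lies outside `supp(x)`, attains the maximum of
`|⟨Ax, A e_k⟩|` over all `k`. -/
theorem omp_example_failure_first_step (s : ℕ) (hs : 0 < s)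
    (A : Matrix (Fin (s + 1)) (Fin (s + 1)) ℝ)
    (hA : ∀ i j : Fin (s + 1), A i j =
      if (j : ℕ) < s then (if i = j then Real.sqrt ((s : ℝ) / ((s : ℝ) + 1)) else 0)
      else (if (i : ℕ) < s then 1 / Real.sqrt ((s : ℝ) * ((s : ℝ) + 1)) else 1))
    (x : Fin (s + 1) → ℝ)
    (hx : x = fun k : Fin (s + 1) => if (k : ℕ) < s then 1 else 0) :
    (∀ k : Fin (s + 1),
      (A *ᵥ (Pi.single k 1 : Fin (s + 1) → ℝ)) ⬝ᵥ (A *ᵥ x) = (s : ℝ) / ((s : ℝ) + 1)) ∧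
    Fin.last s ∉ Function.support x ∧
    ∀ k : Fin (s + 1),
      |(A *ᵥ x) ⬝ᵥ (A *ᵥ (Pi.single k 1 : Fin (s + 1) → ℝ))| ≤
        |(A *ᵥ x) ⬝ᵥ (A *ᵥ (Pi.single (Fin.last s) 1 : Fin (s + 1) → ℝ))| :=
  omp_example_failure_first_step_general s A hA x hx
end
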